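/- For 0 ≤ m ≤ n define w^{ang}_{m,n}(0) := ((−1)^m/π) √(m!/n!) ∫₀^∞ (√2 r)^{n−m} e^{−r²} L_m^{(n−m)}(2r²) r dr. Then for every fixed integer k ≥ 0, lim_{m→∞} w^{ang}_{m,m+k}(0) = 1/(2π). -/

import Mathlib

open MeasureTheory Real

noncomputable section

/-- The associated Laguerre polynomial
`L_m^{(k)}(x) = Σ_{j=0}^{m} (−1)^j C(m+k, m−j) x^j / j!`. -/
def laguerreL (m k : ℕ) (x : ℝ) : ℝ :=
  ∑ j ∈ Finset.range (m + 1),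
    (-1 : ℝ) ^ j * (Nat.choose (m + k) (m - j) : ℝ) * x ^ j / (Nat.factorial j : ℝ)

/-- The value `w^{ang}_{m,n}(0)` of the angular Wigner function of the number-state
matrix element at angle 0 (for `m ≤ n`):
`((−1)^m/π) √(m!/n!) ∫₀^∞ (√2 r)^{n−m} e^{−r²} L_m^{(n−m)}(2r²) r dr`. -/
def wang (m n : ℕ) : ℝ :=
  ((-1 : ℝ) ^ m / π) * Real.sqrt ((Nat.factorial m : ℝ) / (Nat.factorial n : ℝ)) *
    ∫ r in Set.Ioi (0 : ℝ),
      (Real.sqrt 2 * r) ^ (n - m) * Real.exp (-r ^ 2) * laguerreL m (n - m) (2 * r ^ 2) * r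

namespace WAux
open Filter Finset


def A (k j : ℕ) : ℝ := 2^j * Real.Gamma ((j:ℝ) + k/2 + 1) / (Nat.factorial j)

lemma A_def (k j : ℕ) : A k j = 2^j * Real.Gamma ((j:ℝ) + k/2 + 1) / (Nat.factorial j) := rfl

lemma A_pos (k j : ℕ) : 0 < A k j := by
  have h := Real.Gamma_pos_of_pos (show (0:ℝ) < (j:ℝ) + k/2 + 1 by positivity)
  unfold A
  have : (0:ℝ) < (Nat.factorial j : ℝ) := by exact_mod_cast Nat.factorial_pos j
  positivity

lemma A_succ (k j : ℕ) : ((j:ℝ)+1) * A k (j+1) = ((k:ℝ) + 2*j + 2) * A k j := by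
  unfold A
  rw [show (((j+1:ℕ)):ℝ) + (k:ℝ)/2 + 1 = ((j:ℝ) + k/2 + 1) + 1 by push_cast; ring,
    Real.Gamma_add_one (by positivity), Nat.factorial_succ]
  push_cast
  field_simp
  ring

def cc (m k j : ℕ) : ℝ := (Nat.choose (m+k) (k+j) : ℝ)
def ee (m k j : ℕ) : ℝ := (Nat.choose (m+1+k) (k+j) : ℝ)
def ff (m k j : ℕ) : ℝ := (Nat.choose (m+2+k) (k+j) : ℝ)

lemma ee_succ (m k j : ℕ) : ee m k (j+1) = cc m k (j+1) + cc m k j := by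
  unfold ee cc
  rw [show m+1+k = (m+k)+1 by omega, show k+(j+1) = (k+j)+1 from rfl, Nat.choose_succ_succ]
  push_cast; ring

lemma ff_succ (m k j : ℕ) : ff m k (j+1) = ee m k (j+1) + ee m k j := by
  unfold ff ee
  rw [show m+2+k = (m+1+k)+1 by omega, show k+(j+1) = (k+j)+1 from rfl, Nat.choose_succ_succ]
  push_cast; ring

lemma cc_ratio (m k j : ℕ) : ((k:ℝ)+j+1) * cc m k (j+1) = ((m:ℝ) - j) * cc m k j := by
  unfold cc
  rcases le_or_gt j m with h | h
  · have := Nat.choose_succ_right_eq (m+k) (k+j)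
    have hsub : m + k - (k+j) = m - j := by omega
    rw [hsub] at this
    have h2 : ((Nat.choose (m+k) (k+j+1) * (k+j+1) : ℕ) : ℝ) = ((Nat.choose (m+k) (k+j) * (m-j) : ℕ) : ℝ) := by rw [this]
    push_cast [Nat.cast_sub h] at h2
    rw [show k+(j+1) = k+j+1 from rfl]
    linarith
  · have h1 : Nat.choose (m+k) (k+j) = 0 := Nat.choose_eq_zero_of_lt (by omega)
    have h2 : Nat.choose (m+k) (k+(j+1)) = 0 := Nat.choose_eq_zero_of_lt (by omega)
    rw [h1, h2]; push_cast; ring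

def wfun (m k j : ℕ) : ℝ := (-1)^j *
  ( (k*((k:ℝ)+j)/((j:ℝ)+1)) * A k j * cc m k j
    + (2*(m:ℝ)+5) * A k j * (ee m k j - cc m k j)
    - ((m:ℝ)+2) * A k (j+1) * (ee m k j - cc m k j)
    + ((m:ℝ)+2) * A k j * (ff m k j - 2*ee m k j + cc m k j) )

lemma Hw (m k j : ℕ) :
    (-1:ℝ)^j * A k j * (((m:ℝ)+2)*ff m k j + ee m k j - ((m:ℝ)+(k:ℝ)+1)*cc m k j)
      = wfun m k j - wfun m k (j+1) := by
  unfold wfun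
  rw [ff_succ, ee_succ]
  have hb : A k (j+1) = ((k:ℝ) + 2*j + 2) * A k j / ((j:ℝ)+1) := by
    have := A_succ k j; field_simp at this ⊢; linarith
  have hd : A k (j+1+1) = ((k:ℝ) + 2*(j+1) + 2) * A k (j+1) / ((j:ℝ)+1+1) := by
    have := A_succ k (j+1); push_cast at this ⊢; field_simp at this ⊢; linarith
  have hC1 : cc m k (j+1) = ((m:ℝ) - j) * cc m k j / ((k:ℝ)+j+1) := by
    have := cc_ratio m k j
    have hk : ((k:ℝ)+j+1) ≠ 0 := by positivity
    field_simp at this ⊢; linarith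
  rw [hd, hb, hC1]
  have h1 : ((j:ℝ)+1) ≠ 0 := by positivity
  have h2 : ((j:ℝ)+1+1) ≠ 0 := by positivity
  have h3 : ((k:ℝ)+j+1) ≠ 0 := by positivity
  push_cast
  rw [pow_succ]
  field_simp
  ring

lemma wfun_zero (m k : ℕ) : wfun m k 0 = 0 := by
  have hb : A k 1 = ((k:ℝ)+2) * A k 0 := by
    have := A_succ k 0; push_cast at this; linarith
  have hE : ((m:ℝ)+1) * ee m k 0 = ((m:ℝ)+(k:ℝ)+1) * cc m k 0 := by
    unfold ee cc
    have h := Nat.add_one_mul_choose_eq (m+k) m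
    rw [Nat.choose_symm_add] at h
    have h2 : Nat.choose (m+k+1) (m+1) = Nat.choose (m+1+k) (k+0) := by
      rw [show m+k+1 = (m+1)+k by omega, Nat.choose_symm_add]; simp
    rw [h2] at h
    have : ((Nat.succ (m+k) * Nat.choose (m+k) (k+0) : ℕ):ℝ) = ((Nat.choose (m+1+k) (k+0) * Nat.succ m : ℕ):ℝ) := by
      rw [Nat.add_zero]; exact_mod_cast h
    push_cast [Nat.succ_eq_add_one] at this
    linarith
  have hF : ((m:ℝ)+2) * ff m k 0 = ((m:ℝ)+(k:ℝ)+2) * ee m k 0 := by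
    unfold ff ee
    have h := Nat.add_one_mul_choose_eq (m+1+k) (m+1)
    rw [Nat.choose_symm_add] at h
    have h2 : Nat.choose (m+1+k+1) (m+1+1) = Nat.choose (m+2+k) (k+0) := by
      rw [show m+1+k+1 = (m+1+1)+k by omega, Nat.choose_symm_add]
      rw [show m+1+1+k = m+2+k by omega]; simp
    rw [h2] at h
    have : ((Nat.succ (m+1+k) * Nat.choose (m+1+k) (k+0) : ℕ):ℝ) = ((Nat.choose (m+2+k) (k+0) * Nat.succ (m+1) : ℕ):ℝ) := by
      rw [Nat.add_zero]; exact_mod_cast h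
    push_cast [Nat.succ_eq_add_one] at this
    linarith
  unfold wfun
  rw [hb]
  have hm1 : ((m:ℝ)+1) ≠ 0 := by positivity
  have hm2 : ((m:ℝ)+2) ≠ 0 := by positivity
  have hEv : ee m k 0 = ((m:ℝ)+(k:ℝ)+1) * cc m k 0 / ((m:ℝ)+1) := by
    field_simp; linarith
  have hFv : ff m k 0 = ((m:ℝ)+(k:ℝ)+2) * ee m k 0 / ((m:ℝ)+2) := by
    field_simp; linarith
  rw [hFv, hEv]
  push_cast
  field_simp
  ring

def S (k m : ℕ) : ℝ :=
  ∑ j ∈ Finset.range (m+1), (-1:ℝ)^j * (Nat.choose (m+k) (m-j) : ℝ) * A k j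

lemma S_ext (k m N : ℕ) (h : m+1 ≤ N) :
    S k m = ∑ j ∈ Finset.range N, (-1:ℝ)^j * (Nat.choose (m+k) (k+j) : ℝ) * A k j := by
  unfold S
  have h1 : ∑ j ∈ Finset.range (m+1), (-1:ℝ)^j * (Nat.choose (m+k) (m-j) : ℝ) * A k j
      = ∑ j ∈ Finset.range (m+1), (-1:ℝ)^j * (Nat.choose (m+k) (k+j) : ℝ) * A k j := by
    refine Finset.sum_congr rfl (fun j hj => ?_)
    rw [Finset.mem_range] at hj
    rw [Nat.choose_symm_of_eq_add (show m+k = (m-j)+(k+j) by omega)]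
  rw [h1]
  apply Finset.sum_subset (Finset.range_subset_range.mpr h)
  intro j hj hj2
  rw [Finset.mem_range] at hj hj2
  rw [Nat.choose_eq_zero_of_lt (by omega)]
  simp

lemma S_rec (k m : ℕ) :
    ((m:ℝ)+2) * S k (m+2) + S k (m+1) = ((m:ℝ)+(k:ℝ)+1) * S k m := by
  rw [S_ext k m (m+5) (by omega), S_ext k (m+1) (m+5) (by omega),
    S_ext k (m+2) (m+5) (by omega)]
  have key : ((m:ℝ)+2) * (∑ j ∈ Finset.range (m+5), (-1:ℝ)^j * (Nat.choose (m+2+k) (k+j) : ℝ) * A k j)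
      + (∑ j ∈ Finset.range (m+5), (-1:ℝ)^j * (Nat.choose (m+1+k) (k+j) : ℝ) * A k j)
      - ((m:ℝ)+(k:ℝ)+1) * (∑ j ∈ Finset.range (m+5), (-1:ℝ)^j * (Nat.choose (m+k) (k+j) : ℝ) * A k j)
      = ∑ j ∈ Finset.range (m+5), (wfun m k j - wfun m k (j+1)) := by
    rw [Finset.mul_sum, Finset.mul_sum, ← Finset.sum_add_distrib, ← Finset.sum_sub_distrib]
    refine Finset.sum_congr rfl (fun j _ => ?_)
    rw [← Hw m k j]
    unfold cc ee ff
    ring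
  rw [Finset.sum_range_sub' (wfun m k)] at key
  have hN : wfun m k (m+5) = 0 := by
    unfold wfun cc ee ff
    rw [Nat.choose_eq_zero_of_lt (by omega), Nat.choose_eq_zero_of_lt (by omega),
      Nat.choose_eq_zero_of_lt (by omega)]
    push_cast
    ring
  rw [wfun_zero, hN] at key
  have h1 : (∑ j ∈ Finset.range (m+5), (-1:ℝ)^j * (Nat.choose ((m+2)+k) (k+j) : ℝ) * A k j)
      = (∑ j ∈ Finset.range (m+5), (-1:ℝ)^j * (Nat.choose (m+2+k) (k+j) : ℝ) * A k j) := by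
    norm_num
  have h2 : (∑ j ∈ Finset.range (m+5), (-1:ℝ)^j * (Nat.choose ((m+1)+k) (k+j) : ℝ) * A k j)
      = (∑ j ∈ Finset.range (m+5), (-1:ℝ)^j * (Nat.choose (m+1+k) (k+j) : ℝ) * A k j) := by
    norm_num
  push_cast at h1 h2 ⊢
  rw [h1, h2]
  linarith



def R (k m : ℕ) : ℝ := (-1)^m * Real.Gamma ((k:ℝ)/2 + (m/2 : ℕ) + 1) / (Nat.factorial (m/2) : ℝ)

lemma R_rec (k m : ℕ) :
    ((m:ℝ)+2) * R k (m+2) + R k (m+1) = ((m:ℝ)+(k:ℝ)+1) * R k m := by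
  unfold R
  rcases Nat.even_or_odd m with ⟨M, hM⟩ | ⟨M, hM⟩
  · have d0 : m/2 = M := by omega
    have d1 : (m+1)/2 = M := by omega
    have d2 : (m+2)/2 = M+1 := by omega
    have p0 : (-1:ℝ)^m = 1 := Even.neg_one_pow ⟨M, hM⟩
    have p1 : (-1:ℝ)^(m+1) = -1 := by rw [pow_succ, p0]; ring
    have p2 : (-1:ℝ)^(m+2) = 1 := by rw [pow_succ, p1]; ring
    rw [d0, d1, d2, p0, p1, p2]
    have hg : Real.Gamma ((k:ℝ)/2 + ((M+1:ℕ):ℝ) + 1) = ((k:ℝ)/2 + M + 1) * Real.Gamma ((k:ℝ)/2 + (M:ℕ) + 1) := by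
      rw [show (k:ℝ)/2 + ((M+1:ℕ):ℝ) + 1 = ((k:ℝ)/2 + (M:ℕ) + 1) + 1 by push_cast; ring,
        Real.Gamma_add_one (by positivity)]
    rw [hg, Nat.factorial_succ]
    have hM' : (m:ℝ) = 2*M := by exact_mod_cast congrArg (Nat.cast : ℕ → ℝ) (show m = 2*M by omega)
    have hMf : ((Nat.factorial M : ℕ):ℝ) ≠ 0 := by exact_mod_cast (Nat.factorial_pos M).ne'
    have hM1 : ((M:ℝ)+1) ≠ 0 := by positivity
    rw [hM']
    push_cast
    field_simp
    ring
  · have d0 : m/2 = M := by omega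
    have d1 : (m+1)/2 = M+1 := by omega
    have d2 : (m+2)/2 = M+1 := by omega
    have p0 : (-1:ℝ)^m = -1 := Odd.neg_one_pow ⟨M, by omega⟩
    have p1 : (-1:ℝ)^(m+1) = 1 := by rw [pow_succ, p0]; ring
    have p2 : (-1:ℝ)^(m+2) = -1 := by rw [pow_succ, p1]; ring
    rw [d0, d1, d2, p0, p1, p2]
    have hg : Real.Gamma ((k:ℝ)/2 + ((M+1:ℕ):ℝ) + 1) = ((k:ℝ)/2 + M + 1) * Real.Gamma ((k:ℝ)/2 + (M:ℕ) + 1) := by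
      rw [show (k:ℝ)/2 + ((M+1:ℕ):ℝ) + 1 = ((k:ℝ)/2 + (M:ℕ) + 1) + 1 by push_cast; ring,
        Real.Gamma_add_one (by positivity)]
    rw [hg, Nat.factorial_succ]
    have hM' : (m:ℝ) = 2*M+1 := by exact_mod_cast congrArg (Nat.cast : ℕ → ℝ) (show m = 2*M+1 by omega)
    have hMf : ((Nat.factorial M : ℕ):ℝ) ≠ 0 := by exact_mod_cast (Nat.factorial_pos M).ne'
    have hM1 : ((M:ℝ)+1) ≠ 0 := by positivity
    rw [hM']
    push_cast
    field_simp
    ring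

lemma S_zero (k : ℕ) : S k 0 = R k 0 := by
  rw [S, R, Finset.sum_range_one, A_def]
  norm_num

lemma S_one (k : ℕ) : S k 1 = R k 1 := by
  rw [S, R]
  rw [Finset.sum_range_succ, Finset.sum_range_one]
  have hA1 : A k 1 = ((k:ℝ)+2) * A k 0 := by
    have := A_succ k 0; push_cast at this; linarith
  have hC1 : Nat.choose (1+k) (1-0) = k+1 := by
    rw [show 1+k = k+1 by omega, Nat.choose_one_right]
  have hC0 : Nat.choose (1+k) (1-1) = 1 := Nat.choose_zero_right _
  rw [hC1, hC0, hA1, A_def]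
  push_cast
  rw [show (0:ℝ) + (k:ℝ)/2 + 1 = (k:ℝ)/2 + ((0:ℕ):ℝ) + 1 by push_cast; ring]
  norm_num
  ring

lemma S_closed (k m : ℕ) : S k m = R k m := by
  have key : ∀ n, S k n = R k n ∧ S k (n+1) = R k (n+1) := by
    intro n
    induction n with
    | zero => exact ⟨S_zero k, S_one k⟩
    | succ n ih =>
      refine ⟨ih.2, ?_⟩
      have h1 := S_rec k n
      have h2 := R_rec k n
      rw [ih.1, ih.2] at h1
      have hne : ((n:ℝ)+2) ≠ 0 := by positivity
      have : ((n:ℝ)+2) * S k (n+2) = ((n:ℝ)+2) * R k (n+2) := by linarith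
      exact mul_left_cancel₀ hne this
  exact (key m).1



lemma integrable_pow_exp (n : ℕ) :
    IntegrableOn (fun r : ℝ => r ^ n * Real.exp (-r^2)) (Set.Ioi 0) := by
  have h := integrableOn_rpow_mul_exp_neg_rpow (p := 2) (s := (n:ℝ)) (by exact lt_of_lt_of_le neg_one_lt_zero (Nat.cast_nonneg n)) (by norm_num)
  refine h.congr_fun (fun x hx => ?_) measurableSet_Ioi
  rw [Set.mem_Ioi] at hx
  dsimp only; simp only [Real.rpow_natCast, Real.rpow_two]

lemma integral_pow_exp (n : ℕ) :
    ∫ r in Set.Ioi (0:ℝ), r ^ n * Real.exp (-r^2) = (1/2) * Real.Gamma (((n:ℝ)+1)/2) := by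
  have h := integral_rpow_mul_exp_neg_rpow (p := 2) (q := (n:ℝ)) (by norm_num) (by exact lt_of_lt_of_le neg_one_lt_zero (Nat.cast_nonneg n))
  rw [← h]
  refine setIntegral_congr_fun measurableSet_Ioi (fun x hx => ?_)
  rw [Set.mem_Ioi] at hx
  rw [Real.rpow_natCast, show ((2:ℝ)) = ((2:ℕ):ℝ) by norm_num, Real.rpow_natCast]

lemma integral_eq (k m : ℕ) :
    (∫ r in Set.Ioi (0:ℝ),
      (Real.sqrt 2 * r) ^ k * Real.exp (-r ^ 2) * laguerreL m k (2 * r ^ 2) * r)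
    = (Real.sqrt 2)^k / 2 * S k m := by
  have hint : ∀ r : ℝ,
      (Real.sqrt 2 * r) ^ k * Real.exp (-r ^ 2) * laguerreL m k (2 * r ^ 2) * r
      = ∑ j ∈ Finset.range (m+1),
          ((-1:ℝ)^j * (Nat.choose (m+k) (m-j) : ℝ) / (Nat.factorial j : ℝ)
            * (Real.sqrt 2)^k * 2^j) * (r ^ (k + 2*j + 1) * Real.exp (-r^2)) := by
    intro r
    unfold laguerreL
    rw [Finset.mul_sum, Finset.sum_mul]
    refine Finset.sum_congr rfl (fun j _ => ?_)
    rw [mul_pow, mul_pow]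
    rw [show (r^2)^j = r^(2*j) by rw [← pow_mul, mul_comm]]
    rw [show r ^ (k + 2*j + 1) = r^k * r^(2*j) * r by rw [pow_add, pow_add, pow_one]]
    ring
  rw [MeasureTheory.setIntegral_congr_fun measurableSet_Ioi (fun r _ => hint r)]
  rw [MeasureTheory.integral_finset_sum]
  · rw [S, Finset.mul_sum]
    refine Finset.sum_congr rfl (fun j _ => ?_)
    rw [MeasureTheory.integral_const_mul, integral_pow_exp (k + 2*j + 1), A_def]
    have harg : (((k + 2*j + 1 : ℕ):ℝ)+1)/2 = (j:ℝ) + (k:ℝ)/2 + 1 := by push_cast; ring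
    rw [harg]
    have hfac : ((Nat.factorial j : ℕ):ℝ) ≠ 0 := by exact_mod_cast (Nat.factorial_pos j).ne'
    field_simp
  · intro j _
    exact ((integrable_pow_exp (k + 2*j + 1)).const_mul _)



lemma tendsto_halfdiv : Filter.Tendsto (fun m : ℕ => m / 2) Filter.atTop Filter.atTop :=
  Filter.tendsto_atTop_atTop.2 (fun b => ⟨2*b, fun a ha => by omega⟩)

lemma fact_prod (k m : ℕ) :
    ((Nat.factorial (m+k) : ℕ):ℝ) = (Nat.factorial m : ℝ) * ∏ i ∈ Finset.range k, ((m:ℝ)+i+1) := by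
  induction k with
  | zero => simp
  | succ n ih =>
    rw [Finset.prod_range_succ, show m+(n+1) = (m+n)+1 by omega, Nat.factorial_succ]
    push_cast
    rw [ih]
    push_cast
    ring

lemma prod_gamma (α : ℝ) (hα : 0 < α) (M : ℕ) :
    ∏ j ∈ Finset.range (M+1), (α + j) = Real.Gamma (α + M + 1) / Real.Gamma α := by
  induction M with
  | zero =>
    simp
    rw [Real.Gamma_add_one hα.ne']
    field_simp [Real.Gamma_pos_of_pos hα |>.ne']
  | succ n ih =>
    rw [Finset.prod_range_succ, ih]
    have h2 : Real.Gamma (α + ((n+1:ℕ):ℝ) + 1) = (α + (n:ℕ) + 1) * Real.Gamma (α + (n:ℕ) + 1) := by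
      rw [show α + ((n+1:ℕ):ℝ) + 1 = (α + (n:ℕ) + 1) + 1 by push_cast; ring,
        Real.Gamma_add_one (by positivity)]
    rw [h2]
    field_simp [Real.Gamma_pos_of_pos hα |>.ne']
    push_cast; ring

lemma gammaseq_formula (α : ℝ) (hα : 0 < α) (M : ℕ) (hM : 1 ≤ M) :
    Real.Gamma α / Real.GammaSeq α M
      = Real.Gamma (α + M + 1) / ((Nat.factorial M : ℝ) * (M:ℝ)^α) := by
  rw [Real.GammaSeq, prod_gamma α hα M]
  have h1 : (0:ℝ) < Real.Gamma α := Real.Gamma_pos_of_pos hα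
  have h2 : (0:ℝ) < Real.Gamma (α + M + 1) := Real.Gamma_pos_of_pos (by positivity)
  have h3 : (0:ℝ) < (M:ℝ)^α := Real.rpow_pos_of_pos (by exact_mod_cast hM) _
  have h4 : (0:ℝ) < (Nat.factorial M : ℝ) := by exact_mod_cast Nat.factorial_pos M
  field_simp

lemma div_le_div_of_nonneg_right'' {a b c : ℝ} (h : a ≤ b) (hc : 0 < c) : a/c ≤ b/c := by
  gcongr

lemma ratio_tendsto_one (c : ℝ) (hc : 0 < c) :
    Filter.Tendsto (fun m : ℕ => (2*((m/2 : ℕ):ℝ))/((m:ℝ)+c)) Filter.atTop (nhds 1) := by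
  have hden : Filter.Tendsto (fun m : ℕ => (m:ℝ)+c) Filter.atTop Filter.atTop :=
    Filter.tendsto_atTop_add_const_right _ c tendsto_natCast_atTop_atTop
  have hup : Filter.Tendsto (fun m : ℕ => 1 - c/((m:ℝ)+c)) Filter.atTop (nhds 1) := by
    have := (tendsto_const_nhds (x := c) (f := Filter.atTop (α := ℕ))).div_atTop hden
    have h := (tendsto_const_nhds (x := (1:ℝ)) (f := Filter.atTop (α := ℕ))).sub this
    simpa using h
  have hlo : Filter.Tendsto (fun m : ℕ => 1 - (c+1)/((m:ℝ)+c)) Filter.atTop (nhds 1) := by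
    have := (tendsto_const_nhds (x := c+1) (f := Filter.atTop (α := ℕ))).div_atTop hden
    have h := (tendsto_const_nhds (x := (1:ℝ)) (f := Filter.atTop (α := ℕ))).sub this
    simpa using h
  refine tendsto_of_tendsto_of_tendsto_of_le_of_le' hlo hup ?_ ?_
  · filter_upwards with m
    have hpos : (0:ℝ) < (m:ℝ)+c := by positivity
    have h1 : ((m:ℝ)) - 1 ≤ 2*((m/2:ℕ):ℝ) := by
      have h : m ≤ 2*(m/2) + 1 := by omega
      have h' : (m:ℝ) ≤ 2*((m/2:ℕ):ℝ) + 1 := by exact_mod_cast h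
      linarith
    have heq : 1 - (c+1)/((m:ℝ)+c) = ((m:ℝ)-1)/((m:ℝ)+c) := by field_simp; ring
    rw [heq]
    exact div_le_div_of_nonneg_right'' h1 hpos
  · filter_upwards with m
    have hpos : (0:ℝ) < (m:ℝ)+c := by positivity
    have h1 : 2*((m/2:ℕ):ℝ) ≤ (m:ℝ) := by
      have h : 2*(m/2) ≤ m := by omega
      exact_mod_cast h
    have heq : 1 - c/((m:ℝ)+c) = ((m:ℝ))/((m:ℝ)+c) := by field_simp; ring
    rw [heq]
    exact div_le_div_of_nonneg_right'' h1 hpos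



lemma F_tendsto (k : ℕ) (hk : 1 ≤ k) :
    Filter.Tendsto (fun m : ℕ =>
      (Real.sqrt 2)^k * Real.sqrt ((Nat.factorial m : ℝ)/((Nat.factorial (m+k) : ℝ)))
        * Real.Gamma ((k:ℝ)/2 + ((m/2:ℕ):ℝ) + 1) / ((Nat.factorial (m/2) : ℝ)))
      Filter.atTop (nhds 1) := by
  set α : ℝ := (k:ℝ)/2 with hαdef
  have hα : 0 < α := by
    have : (0:ℝ) < (k:ℝ) := by exact_mod_cast hk
    positivity
  have h1 : Filter.Tendsto (fun m : ℕ => Real.Gamma α / Real.GammaSeq α (m/2))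
      Filter.atTop (nhds 1) := by
    have hg := (Real.GammaSeq_tendsto_Gamma α).comp tendsto_halfdiv
    have hne : Real.Gamma α ≠ 0 := (Real.Gamma_pos_of_pos hα).ne'
    have := Filter.Tendsto.div (tendsto_const_nhds (x := Real.Gamma α)
      (f := Filter.atTop (α := ℕ))) hg hne
    rw [div_self hne] at this; exact this
  have h2 : Filter.Tendsto (fun m : ℕ => ∏ i ∈ Finset.range k,
      (2*((m/2:ℕ):ℝ)/((m:ℝ)+((i:ℝ)+1)))) Filter.atTop (nhds 1) := by
    have := tendsto_finset_prod (f := fun (i : ℕ) (m : ℕ) => 2*((m/2:ℕ):ℝ)/((m:ℝ)+((i:ℝ)+1)))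
      (a := fun _ => (1:ℝ)) (x := Filter.atTop) (Finset.range k)
      (fun i _ => ratio_tendsto_one ((i:ℝ)+1) (by positivity))
    simpa using this
  have h3 : Filter.Tendsto (fun m : ℕ => Real.sqrt (∏ i ∈ Finset.range k,
      (2*((m/2:ℕ):ℝ)/((m:ℝ)+((i:ℝ)+1))))) Filter.atTop (nhds 1) := by
    have := (Real.continuous_sqrt.tendsto 1).comp h2
    rw [Real.sqrt_one] at this; exact this
  have hmain := h1.mul h3
  rw [one_mul] at hmain
  refine hmain.congr' ?_
  filter_upwards [Filter.eventually_atTop.2 ⟨2, fun m hm => hm⟩] with m hm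
  have hM : 1 ≤ m/2 := by omega
  set M : ℕ := m/2 with hMdef
  have hMpos : (0:ℝ) < (M:ℝ) := by exact_mod_cast hM
  rw [gammaseq_formula α hα M hM]
  -- key sqrt computation
  have hfm : (0:ℝ) < (Nat.factorial m : ℝ) := by exact_mod_cast Nat.factorial_pos m
  have hfmk : (0:ℝ) < (Nat.factorial (m+k) : ℝ) := by exact_mod_cast Nat.factorial_pos (m+k)
  have hratio : (0:ℝ) ≤ (Nat.factorial m : ℝ)/(Nat.factorial (m+k) : ℝ) := by positivity
  have hMα : (0:ℝ) < (M:ℝ)^α := Real.rpow_pos_of_pos hMpos _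
  have hprod_eq : (∏ i ∈ Finset.range k, (2*((M:ℕ):ℝ)/((m:ℝ)+((i:ℝ)+1))))
      = (2*(M:ℝ))^k * ((Nat.factorial m : ℝ)/(Nat.factorial (m+k) : ℝ)) := by
    rw [Finset.prod_div_distrib, Finset.prod_const, Finset.card_range]
    have hden : ∏ i ∈ Finset.range k, ((m:ℝ)+((i:ℝ)+1))
        = (Nat.factorial (m+k) : ℝ) / (Nat.factorial m : ℝ) := by
      rw [eq_div_iff hfm.ne']
      rw [fact_prod k m]
      have hcg : (∏ i ∈ Finset.range k, ((m:ℝ)+((i:ℝ)+1)))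
          = ∏ i ∈ Finset.range k, ((m:ℝ)+(i:ℝ)+1) := Finset.prod_congr rfl (fun i _ => by ring)
      rw [hcg]
      ring
    rw [hden]
    field_simp
  have hRHS2 : ((Real.sqrt 2)^k * Real.sqrt ((Nat.factorial m : ℝ)/((Nat.factorial (m+k) : ℝ)))
      * (M:ℝ)^α)^2 = (2*(M:ℝ))^k * ((Nat.factorial m : ℝ)/(Nat.factorial (m+k) : ℝ)) := by
    have e1 : ((Real.sqrt 2)^k)^2 = 2^k := by
      rw [← pow_mul, mul_comm k 2, pow_mul, Real.sq_sqrt (by norm_num : (0:ℝ) ≤ 2)]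
    have e2 : (Real.sqrt ((Nat.factorial m : ℝ)/((Nat.factorial (m+k) : ℝ))))^2
        = (Nat.factorial m : ℝ)/(Nat.factorial (m+k) : ℝ) := Real.sq_sqrt hratio
    have e3 : ((M:ℝ)^α)^2 = (M:ℝ)^k := by
      rw [sq, ← Real.rpow_add hMpos]
      rw [show α + α = (k:ℝ) by rw [hαdef]; ring, Real.rpow_natCast]
    calc ((Real.sqrt 2)^k * Real.sqrt ((Nat.factorial m : ℝ)/((Nat.factorial (m+k) : ℝ)))
        * (M:ℝ)^α)^2
        = ((Real.sqrt 2)^k)^2 * (Real.sqrt ((Nat.factorial m : ℝ)/((Nat.factorial (m+k) : ℝ))))^2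
          * ((M:ℝ)^α)^2 := by ring
      _ = 2^k * ((Nat.factorial m : ℝ)/(Nat.factorial (m+k) : ℝ)) * (M:ℝ)^k := by
          rw [e1, e2, e3]
      _ = (2*(M:ℝ))^k * ((Nat.factorial m : ℝ)/(Nat.factorial (m+k) : ℝ)) := by
          rw [mul_pow]; ring
  have hsqrt : Real.sqrt (∏ i ∈ Finset.range k, (2*((M:ℕ):ℝ)/((m:ℝ)+((i:ℝ)+1))))
      = (Real.sqrt 2)^k * Real.sqrt ((Nat.factorial m : ℝ)/((Nat.factorial (m+k) : ℝ)))
        * (M:ℝ)^α := by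
    rw [hprod_eq, ← hRHS2, Real.sqrt_sq (by positivity)]
  rw [hsqrt]
  have hMf : (0:ℝ) < (Nat.factorial M : ℝ) := by exact_mod_cast Nat.factorial_pos M
  field_simp

end WAux

lemma wang_eq_aux (k m : ℕ) : wang m (m + k)
    = (1/(2*π)) * ((Real.sqrt 2)^k * Real.sqrt ((Nat.factorial m : ℝ)/((Nat.factorial (m+k) : ℝ)))
        * Real.Gamma ((k:ℝ)/2 + ((m/2:ℕ):ℝ) + 1) / ((Nat.factorial (m/2) : ℝ))) := by
  unfold wang
  rw [Nat.add_sub_cancel_left]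
  rw [WAux.integral_eq k m, WAux.S_closed k m, WAux.R]
  have ht : ((-1:ℝ)^m) * ((-1:ℝ)^m) = 1 := by
    rw [← pow_add]
    exact Even.neg_one_pow ⟨m, rfl⟩
  linear_combination (Real.sqrt ((Nat.factorial m : ℝ)/((Nat.factorial (m+k) : ℝ)))
    * (Real.sqrt 2)^k * Real.Gamma ((k:ℝ)/2 + ((m/2:ℕ):ℝ) + 1)
    / (2 * π * ((Nat.factorial (m/2) : ℝ)))) * ht

/-- For every fixed integer `k ≥ 0`,
`lim_{m→∞} w^{ang}_{m,m+k}(0) = 1/(2π)`. -/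
theorem wang_tendsto_diag (k : ℕ) :
    Filter.Tendsto (fun m : ℕ => wang m (m + k)) Filter.atTop (nhds (1 / (2 * π))) := by
  have hF : Filter.Tendsto (fun m : ℕ =>
      (Real.sqrt 2)^k * Real.sqrt ((Nat.factorial m : ℝ)/((Nat.factorial (m+k) : ℝ)))
        * Real.Gamma ((k:ℝ)/2 + ((m/2:ℕ):ℝ) + 1) / ((Nat.factorial (m/2) : ℝ)))
      Filter.atTop (nhds 1) := by
    rcases Nat.eq_zero_or_pos k with hk | hk
    · subst hk
      have hconst : ∀ m : ℕ,
          (Real.sqrt 2)^(0:ℕ) * Real.sqrt ((Nat.factorial m : ℝ)/((Nat.factorial (m+0) : ℝ)))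
            * Real.Gamma (((0:ℕ):ℝ)/2 + ((m/2:ℕ):ℝ) + 1) / ((Nat.factorial (m/2) : ℝ)) = 1 := by
        intro m
        have hf : ((Nat.factorial m : ℝ)) ≠ 0 := by exact_mod_cast (Nat.factorial_pos m).ne'
        have hg : Real.Gamma (((0:ℕ):ℝ)/2 + ((m/2:ℕ):ℝ) + 1) = (Nat.factorial (m/2) : ℝ) := by
          rw [show ((0:ℕ):ℝ)/2 + ((m/2:ℕ):ℝ) + 1 = ((m/2:ℕ):ℝ) + 1 by push_cast; ring]
          exact_mod_cast Real.Gamma_nat_eq_factorial (m/2)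
        rw [hg]
        have hf2 : ((Nat.factorial (m/2) : ℝ)) ≠ 0 := by
          exact_mod_cast (Nat.factorial_pos (m/2)).ne'
        rw [Nat.add_zero, div_self hf, Real.sqrt_one]
        field_simp
      exact Filter.Tendsto.congr (fun m => (hconst m).symm) tendsto_const_nhds
    · exact WAux.F_tendsto k hk
  have := hF.const_mul (1/(2*π))
  rw [mul_one] at this
  exact this.congr (fun m => (wang_eq_aux k m).symm)
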